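/- arXiv:2605.06087 — 2 statements merged into one kernel-verified Lean document; each statement's English description precedes it below -/
import Mathlib

section
/- Let μ be a Markov kernel on a measurable space X, S ⊆ X measurable, and suppose B : X → ℝ≥0 is a nonnegative measurable function with constants γ > η ≥ 0 and β ≥ 0 satisfying: (a) B(x) ≤ η for all x in an initial set X₀ ⊆ S, (b) B(x) ≥ γ for all x ∉ S, and (c) E_μ[B(X_+)|X=x] − B(x) ≤ β for all x ∈ S. Then for every x₀ ∈ X₀, the probability that the chain started at x₀ exits S within T steps is at most (η + βT)/γ; equivalently the T-step safety probability is at least 1 − (η + βT)/γ. -/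
/-!
By induction on `n`, the exit probability within `n` steps satisfies
`u n ≤ (B + β n) / γ` pointwise. Off `S` this holds because `u n = 1 ≤ B / γ`; on `S` one
integrates the induction hypothesis against `κ x` and uses that `B` grows by at most `β` in
expectation. At `x₀ ∈ X₀` the right-hand side is at most `(η + β T) / γ`.
-/

open MeasureTheory ProbabilityTheory
open scoped Classical

namespace ProbabilityTheory.Kernel

variable {X : Type*} [MeasurableSpace X] {κ : Kernel X X} {S : Set X} {u : ℕ → X → ℝ}

structure IsExitRecursion (κ : Kernel X X) (S : Set X) (u : ℕ → X → ℝ) : Prop where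
  zero : ∀ x, u 0 x = if x ∈ S then 0 else 1
  succ : ∀ n x, u (n + 1) x =
    (if x ∈ S then (0 : ℝ) else 1) + (if x ∈ S then (1 : ℝ) else 0) * ∫ y, u n y ∂(κ x)

namespace IsExitRecursion

variable (hu : IsExitRecursion κ S u)
include hu

theorem zero_of_mem {x : X} (hx : x ∈ S) : u 0 x = 0 := by
  simp [hu.zero, hx]

theorem zero_of_notMem {x : X} (hx : x ∉ S) : u 0 x = 1 := by
  simp [hu.zero, hx]

theorem succ_of_mem (n : ℕ) {x : X} (hx : x ∈ S) : u (n + 1) x = ∫ y, u n y ∂(κ x) := by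
  simp [hu.succ, hx]

theorem succ_of_notMem (n : ℕ) {x : X} (hx : x ∉ S) : u (n + 1) x = 1 := by
  simp [hu.succ, hx]

theorem nonneg (n : ℕ) (x : X) : 0 ≤ u n x := by
  induction n generalizing x with
  | zero => by_cases hx : x ∈ S <;> simp [hu.zero_of_mem, hu.zero_of_notMem, hx]
  | succ n ih =>
    by_cases hx : x ∈ S
    · rw [hu.succ_of_mem n hx]
      exact integral_nonneg ih
    · simp [hu.succ_of_notMem n hx]

theorem le_barrier [IsMarkovKernel κ] {B : X → ℝ} {γ β : ℝ} (hγ : 0 < γ) (hβ : 0 ≤ β)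
    (hBnn : ∀ x, 0 ≤ B x) (hBint : ∀ x, Integrable B (κ x)) (hb : ∀ x ∉ S, γ ≤ B x)
    (hc : ∀ x ∈ S, (∫ y, B y ∂(κ x)) - B x ≤ β) (n : ℕ) (x : X) :
    u n x ≤ (B x + β * n) / γ := by
  induction n generalizing x with
  | zero =>
    by_cases hx : x ∈ S
    · rw [hu.zero_of_mem hx]
      simpa using div_nonneg (hBnn x) hγ.le
    · rw [hu.zero_of_notMem hx, le_div_iff₀ hγ]
      simpa using hb x hx
  | succ n ih =>
    by_cases hx : x ∈ S
    · have hgint : Integrable (fun y ↦ (B y + β * n) / γ) (κ x) :=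
        ((hBint x).add (integrable_const _)).div_const γ
      calc u (n + 1) x = ∫ y, u n y ∂(κ x) := hu.succ_of_mem n hx
        -- `u n` need not be measurable: a nonnegative non-integrable function has integral `0`.
        _ ≤ ∫ y, (B y + β * n) / γ ∂(κ x) :=
          integral_mono_of_nonneg (.of_forall (hu.nonneg n)) hgint (.of_forall ih)
        _ = ((∫ y, B y ∂(κ x)) + β * n) / γ := by
          rw [integral_div, integral_add (hBint x) (integrable_const _)]
          simp
        _ ≤ (B x + β * ↑(n + 1)) / γ := by
          rw [div_le_div_iff_of_pos_right hγ]
          push_cast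
          linarith [hc x hx]
    · rw [hu.succ_of_notMem n hx, le_div_iff₀ hγ]
      have : 0 ≤ β * ↑(n + 1) := by positivity
      linarith [hb x hx]

end IsExitRecursion

end ProbabilityTheory.Kernel

theorem stmt_3_general {X : Type*} [MeasurableSpace X] (κ : ProbabilityTheory.Kernel X X)
    [ProbabilityTheory.IsMarkovKernel κ] (S X₀ : Set X) (T : ℕ)
    (B : X → ℝ) (hBnn : ∀ x, 0 ≤ B x)
    (hBint : ∀ x, Integrable B (κ x))
    (γ η β : ℝ) (hγη : η < γ) (hβ : 0 ≤ β)
    (ha : ∀ x ∈ X₀, B x ≤ η)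
    (hb : ∀ x ∉ S, γ ≤ B x)
    (hc : ∀ x ∈ S, (∫ y, B y ∂(κ x)) - B x ≤ β)
    (u : ℕ → X → ℝ)
    (hu0 : ∀ x, u 0 x = if x ∈ S then 0 else 1)
    (huS : ∀ n x, u (n + 1) x =
      (if x ∈ S then (0 : ℝ) else 1) +
        (if x ∈ S then (1 : ℝ) else 0) * ∫ y, u n y ∂(κ x)) :
    ∀ x₀ ∈ X₀, u T x₀ ≤ (η + β * T) / γ ∧ 1 - (η + β * T) / γ ≤ 1 - u T x₀ := by
  intro x₀ hx₀
  have hγ : 0 < γ := by linarith [hBnn x₀, ha x₀ hx₀]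
  have hu : κ.IsExitRecursion S u := ⟨hu0, huS⟩
  have hbound : u T x₀ ≤ (η + β * T) / γ := by
    refine (hu.le_barrier hγ hβ hBnn hBint hb hc T x₀).trans ?_
    gcongr
    exact ha x₀ hx₀
  exact ⟨hbound, by linarith⟩

/-- Stochastic barrier certificate bound. If `B ≥ 0` satisfies
`B ≤ η` on the initial set `X₀ ⊆ S`, `B ≥ γ` off `S`, and the expected one-step
increase of `B` is at most `β` on `S`, then the probability of exiting `S`
within `T` steps (given by the standard exit-probability recursion `u`) is at
most `(η + βT)/γ`; equivalently the `T`-step safety probability is at least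
`1 − (η + βT)/γ`. -/
theorem stmt_3 {X : Type*} [MeasurableSpace X] (κ : ProbabilityTheory.Kernel X X)
    [ProbabilityTheory.IsMarkovKernel κ] (S X₀ : Set X) (hS : MeasurableSet S)
    (hX₀ : X₀ ⊆ S) (T : ℕ)
    (B : X → ℝ) (hBmeas : Measurable B) (hBnn : ∀ x, 0 ≤ B x)
    (hBint : ∀ x, Integrable B (κ x))
    (γ η β : ℝ) (hγη : η < γ) (hη : 0 ≤ η) (hβ : 0 ≤ β)
    (ha : ∀ x ∈ X₀, B x ≤ η)
    (hb : ∀ x ∉ S, γ ≤ B x)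
    (hc : ∀ x ∈ S, (∫ y, B y ∂(κ x)) - B x ≤ β)
    (u : ℕ → X → ℝ)
    (hu0 : ∀ x, u 0 x = if x ∈ S then 0 else 1)
    (huS : ∀ n x, u (n + 1) x =
      (if x ∈ S then (0 : ℝ) else 1) +
        (if x ∈ S then (1 : ℝ) else 0) * ∫ y, u n y ∂(κ x)) :
    ∀ x₀ ∈ X₀, u T x₀ ≤ (η + β * T) / γ ∧ 1 - (η + β * T) / γ ≤ 1 - u T x₀ :=
  stmt_3_general κ S X₀ T B hBnn hBint γ η β hγη hβ ha hb hc u hu0 huS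
end

section
/- Let μ be a Markov kernel on X and S ⊆ X. Define the truncated robust value iteration V̲_T(x) = 1_S(x) and V̲_l(x) = 1_S(x)·[E_μ[V̲_{l+1}(X_+)|X=x] − c]₀¹, where [z]₀¹ := min(max(z,0),1) and c ≥ 0 is a fixed penalty. Then V̲_l(x) ≤ V_l(x) for all l and x, where V is the exact value iteration V_T = 1_S, V_l(x) = 1_S(x)·E_μ[V_{l+1}(X_+)|X=x]; hence V̲_0(x₀) is a lower bound on the T-step safety probability. -/
open MeasureTheory ENNReal

theorem min_one_lintegral_tsub_le_lintegral {α : Type*} [MeasurableSpace α] (μ : Measure α)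
    {f g : α → ℝ≥0∞} (hfg : f ≤ g) (c : ℝ≥0∞) :
    min 1 ((∫⁻ y, f y ∂μ) - c) ≤ ∫⁻ y, g y ∂μ :=
  (min_le_right _ _).trans (tsub_le_self.trans (lintegral_mono hfg))

theorem stmt_10_general {X : Type*} [MeasurableSpace X] (κ : ProbabilityTheory.Kernel X X)
    (S : Set X)
    (T : ℕ) (c : ℝ≥0∞)
    (V Vlow : ℕ → X → ℝ≥0∞)
    (hVT : ∀ x, V T x = S.indicator 1 x)
    (hVl : ∀ l < T, ∀ x, V l x =
      S.indicator (fun x' => ∫⁻ y, V (l + 1) y ∂(κ x')) x)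
    (hVlowT : ∀ x, Vlow T x = S.indicator 1 x)
    (hVlowl : ∀ l < T, ∀ x, Vlow l x =
      S.indicator (fun x' => min 1 ((∫⁻ y, Vlow (l + 1) y ∂(κ x')) - c)) x) :
    ∀ l ≤ T, ∀ x, Vlow l x ≤ V l x := by
  intro l hl
  induction hl using Nat.decreasingInduction with
  | self => intro x; rw [hVlowT, hVT]
  | of_succ l hlT ih =>
    intro x
    rw [hVlowl l hlT x, hVl l hlT x]
    exact Set.indicator_le_indicator (min_one_lintegral_tsub_le_lintegral _ ih c)

/-- The truncated robust value iteration with penalty `c ≥ 0`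
lower-bounds the exact value iteration at every step; hence `V̲ 0 x₀` is a
lower bound on the `T`-step safety probability `V 0 x₀`. -/
theorem stmt_10 {X : Type*} [MeasurableSpace X] (κ : ProbabilityTheory.Kernel X X)
    [ProbabilityTheory.IsMarkovKernel κ] (S : Set X) (hS : MeasurableSet S)
    (T : ℕ) (c : ℝ≥0∞)
    (V Vlow : ℕ → X → ℝ≥0∞)
    (hVT : ∀ x, V T x = S.indicator 1 x)
    (hVl : ∀ l < T, ∀ x, V l x =
      S.indicator (fun x' => ∫⁻ y, V (l + 1) y ∂(κ x')) x)
    (hVlowT : ∀ x, Vlow T x = S.indicator 1 x)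
    (hVlowl : ∀ l < T, ∀ x, Vlow l x =
      S.indicator (fun x' => min 1 ((∫⁻ y, Vlow (l + 1) y ∂(κ x')) - c)) x) :
    ∀ l ≤ T, ∀ x, Vlow l x ≤ V l x :=
  stmt_10_general κ S T c V Vlow hVT hVl hVlowT hVlowl
end
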